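/- arXiv:2501.11444 — 5 statements merged into one kernel-verified Lean document; each statement's English description precedes it below -/
import Mathlib

section
/- Let A, B, C be three affinely independent points of the Euclidean plane E = EuclideanSpace ℝ (Fin 2), with side lengths a = dist B C, b = dist A C, c = dist A B. Then the incenter (a•A + b•B + c•C)/(a+b+c), the centroid (1/3)•A + (1/3)•B + (1/3)•C, and the orthocenter of the triangle (Mathlib's EuclideanGeometry.Triangle.orthocenter of the simplex with vertices A, B, C) are collinear (the three points lie on a common affine line of E) if and only if the triangle is isosceles, i.e. a = b or b = c or a = c. -/
open RealInnerProductSpace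

private lemma aux_coeffs {E : Type*} [NormedAddCommGroup E] [InnerProductSpace ℝ E]
    {u v : E} (hD : ⟪u, u⟫ * ⟪v, v⟫ - ⟪u, v⟫^2 ≠ 0) {α β : ℝ}
    (hz : α • u + β • v = 0) : α = 0 ∧ β = 0 := by
  have h1 : α*⟪u, u⟫ + β*⟪u, v⟫ = 0 := by
    have := congrArg (fun w => ⟪u, w⟫) hz
    simpa [inner_add_right, real_inner_smul_right] using this
  have h2 : α*⟪u, v⟫ + β*⟪v, v⟫ = 0 := by
    have := congrArg (fun w => ⟪v, w⟫) hz
    simpa [inner_add_right, real_inner_smul_right, real_inner_comm v u] using this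
  constructor
  · have h3 : α * (⟪u, u⟫ * ⟪v, v⟫ - ⟪u, v⟫^2) = 0 := by
      linear_combination ⟪v, v⟫ * h1 - ⟪u, v⟫ * h2
    exact (mul_eq_zero.mp h3).resolve_right hD
  · have h3 : β * (⟪u, u⟫ * ⟪v, v⟫ - ⟪u, v⟫^2) = 0 := by
      linear_combination ⟪u, u⟫ * h2 - ⟪u, v⟫ * h1
    exact (mul_eq_zero.mp h3).resolve_right hD

private lemma aux_dep {E : Type*} [NormedAddCommGroup E] [InnerProductSpace ℝ E]
    {u v : E} (hD : ⟪u, u⟫ * ⟪v, v⟫ - ⟪u, v⟫^2 ≠ 0) (X Y X' Y' : ℝ) :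
    (∃ w : E, (∃ r : ℝ, X • u + Y • v = r • w) ∧ (∃ r : ℝ, X' • u + Y' • v = r • w)) ↔
      X*Y' - Y*X' = 0 := by
  constructor
  · rintro ⟨w, ⟨r, hr⟩, ⟨r', hr'⟩⟩
    have h0 : r' • (X • u + Y • v) = r • (X' • u + Y' • v) := by
      rw [hr, hr', smul_smul, smul_smul, mul_comm]
    have hz : (r'*X - r*X') • u + (r'*Y - r*Y') • v = 0 := by
      linear_combination (norm := module) h0
    obtain ⟨e1, e2⟩ := aux_coeffs hD hz
    by_cases hr0 : r = 0
    · subst hr0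
      simp only [zero_smul] at hr
      obtain ⟨hX, hY⟩ := aux_coeffs hD hr
      rw [hX, hY]; ring
    · have h3 : r * (X*Y' - Y*X') = 0 := by linear_combination Y*e1 - X*e2
      exact (mul_eq_zero.mp h3).resolve_left hr0
  · intro hdet
    by_cases hX : X = 0
    · by_cases hY : Y = 0
      · exact ⟨X' • u + Y' • v, ⟨0, by simp [hX, hY]⟩, ⟨1, (one_smul _ _).symm⟩⟩
      · have hX' : X' = 0 := by
          have h3 : Y * X' = 0 := by linear_combination -hdet + Y'*hX
          exact (mul_eq_zero.mp h3).resolve_left hY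
        exact ⟨v, ⟨Y, by simp [hX]⟩, ⟨Y', by simp [hX']⟩⟩
    · refine ⟨X • u + Y • v, ⟨1, (one_smul _ _).symm⟩, ⟨X'/X, ?_⟩⟩
      rw [smul_add, smul_smul, smul_smul, div_mul_cancel₀ _ hX]
      congr 1
      have : X'/X*Y = Y' := by field_simp; linear_combination -hdet
      rw [this]

theorem incenter_centroid_orthocenter_collinear_iff_isosceles
    (A B C : EuclideanSpace ℝ (Fin 2))
    (h : AffineIndependent ℝ ![A, B, C]) :
    Collinear ℝ
      ({(dist B C / (dist B C + dist A C + dist A B)) • A +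
        (dist A C / (dist B C + dist A C + dist A B)) • B +
        (dist A B / (dist B C + dist A C + dist A B)) • C,
        (1 / 3 : ℝ) • A + (1 / 3 : ℝ) • B + (1 / 3 : ℝ) • C,
        Affine.Triangle.orthocenter
          (⟨![A, B, C], h⟩ : Affine.Triangle ℝ (EuclideanSpace ℝ (Fin 2)))} :
        Set (EuclideanSpace ℝ (Fin 2)))
    ↔ (dist B C = dist A C ∨ dist A C = dist A B ∨ dist B C = dist A B) := by
  classical
  set T : Affine.Triangle ℝ (EuclideanSpace ℝ (Fin 2)) := ⟨![A, B, C], h⟩ with hT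
  set H : EuclideanSpace ℝ (Fin 2) := T.orthocenter with hHdef
  set u : EuclideanSpace ℝ (Fin 2) := B - A with hu
  set v : EuclideanSpace ℝ (Fin 2) := C - A with hv
  -- distances
  have hinj := h.injective
  have hAB : A ≠ B := by
    intro he; exact (by decide : (0:Fin 3) ≠ 1) (hinj (by simpa using he))
  have hAC : A ≠ C := by
    intro he; exact (by decide : (0:Fin 3) ≠ 2) (hinj (by simpa using he))
  have hBC : B ≠ C := by
    intro he; exact (by decide : (1:Fin 3) ≠ 2) (hinj (by simpa using he))
  have ha : 0 < dist B C := dist_pos.2 hBC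
  have hb : 0 < dist A C := dist_pos.2 hAC
  have hc : 0 < dist A B := dist_pos.2 hAB
  have hcu : ‖u‖ = dist A B := by rw [hu, dist_eq_norm, norm_sub_rev]
  have hbv : ‖v‖ = dist A C := by rw [hv, dist_eq_norm, norm_sub_rev]
  have hc2 : ⟪u, u⟫ = dist A B ^ 2 := by rw [real_inner_self_eq_norm_sq, hcu]
  have hb2 : ⟪v, v⟫ = dist A C ^ 2 := by rw [real_inner_self_eq_norm_sq, hbv]
  have ht : dist B C ^ 2 = dist A C ^ 2 + dist A B ^ 2 - 2 * ⟪u, v⟫ := by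
    have h1 : dist B C = ‖u - v‖ := by rw [hu, hv, dist_eq_norm]; congr 1; abel
    rw [h1, norm_sub_sq_real, hcu, hbv]; ring
  -- not collinear, nondegeneracy
  have hnc : ¬ Collinear ℝ ({A, B, C} : Set (EuclideanSpace ℝ (Fin 2))) :=
    affineIndependent_iff_not_collinear_set.mp h
  have hns : ∀ r s : ℝ, r ≠ 0 → r • u ≠ s • v := by
    intro r s hr0 heq
    apply hnc
    rw [collinear_iff_of_mem (Set.mem_insert A _)]
    refine ⟨v, ?_⟩
    rintro p (rfl | rfl | rfl)
    · exact ⟨0, by simp⟩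
    · refine ⟨s / r, ?_⟩
      have h' : (s / r) • v = u := by
        rw [div_eq_inv_mul, ← smul_smul, ← heq, smul_smul, inv_mul_cancel₀ hr0, one_smul]
      rw [h', hu]; simp
    · exact ⟨1, by rw [one_smul, hv]; simp⟩
  have hnv : ‖v‖ ≠ 0 := by
    rw [hbv]; exact hb.ne'
  have hD : ⟪u, u⟫ * ⟪v, v⟫ - ⟪u, v⟫ ^ 2 ≠ 0 := by
    have h1 : ⟪u, v⟫ < ‖u‖ * ‖v‖ :=
      inner_lt_norm_mul_iff_real.mpr (fun he => hns ‖v‖ ‖u‖ hnv he)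
    have h2 : ⟪-u, v⟫ < ‖-u‖ * ‖v‖ := by
      refine inner_lt_norm_mul_iff_real.mpr (fun he => ?_)
      rw [norm_neg, smul_neg] at he
      exact hns ‖v‖ (-‖u‖) hnv (by rw [neg_smul]; exact neg_eq_iff_eq_neg.mp he)
    rw [inner_neg_left, norm_neg] at h2
    rw [real_inner_self_eq_norm_sq, real_inner_self_eq_norm_sq]
    nlinarith [h1, h2]
  -- orthocenter equations
  have hp0 : T.points 0 = A := rfl
  have hp1 : T.points 1 = B := rfl
  have hp2 : T.points 2 = C := rfl
  have hd0 : H -ᵥ T.points 0 ∈ (T.altitude 0).direction :=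
    AffineSubspace.vsub_mem_direction T.orthocenter_mem_altitude (T.mem_altitude 0)
  have hd1 : H -ᵥ T.points 1 ∈ (T.altitude 1).direction :=
    AffineSubspace.vsub_mem_direction T.orthocenter_mem_altitude (T.mem_altitude 1)
  rw [Affine.Simplex.direction_altitude, Submodule.mem_inf] at hd0 hd1
  -- representation of H - A in span {u, v}
  have hle : vectorSpan ℝ (Set.range T.points) ≤ Submodule.span ℝ {u, v} := by
    rw [vectorSpan_def, Submodule.span_le]
    rintro z ⟨p, ⟨i, rfl⟩, q, ⟨j, rfl⟩, rfl⟩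
    have key : ∀ i : Fin 3, ∃ x y : ℝ, T.points i = x • u + y • v + A := by
      intro i
      fin_cases i
      · exact ⟨0, 0, by show A = _; rw [hu, hv]; module⟩
      · exact ⟨1, 0, by show B = _; rw [hu, hv]; module⟩
      · exact ⟨0, 1, by show C = _; rw [hu, hv]; module⟩
    obtain ⟨x1, y1, e1⟩ := key i
    obtain ⟨x2, y2, e2⟩ := key j
    refine Submodule.mem_span_pair.mpr ⟨x1 - x2, y1 - y2, ?_⟩
    simp only [vsub_eq_sub]
    rw [e1, e2]
    module
  obtain ⟨x, y, hw⟩ := Submodule.mem_span_pair.mp (hle hd0.2)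
  rw [hp0, vsub_eq_sub] at hw
  -- altitude orthogonality: ⟪C - B, H - A⟫ = 0 and ⟪C - A, H - B⟫ = 0
  have hfm : ∀ (i j : Fin 3), i ≠ j → T.points i ∈ T.points '' {j}ᶜ := by
    intro i j hij
    exact ⟨i, by simp [Finset.mem_erase, hij], rfl⟩
  have E0 : ⟪C - B, H - A⟫ = 0 := by
    have hmemf : C -ᵥ B ∈ vectorSpan ℝ (T.points '' {(0 : Fin 3)}ᶜ) := by
      have := vsub_mem_vectorSpan ℝ (hfm 2 0 (by decide)) (hfm 1 0 (by decide))
      rwa [hp2, hp1] at this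
    have := (Submodule.mem_orthogonal _ _).1 hd0.1 _ hmemf
    rwa [vsub_eq_sub] at this
  have E1 : ⟪C - A, H - B⟫ = 0 := by
    have hmemf : C -ᵥ A ∈ vectorSpan ℝ (T.points '' {(1 : Fin 3)}ᶜ) := by
      have := vsub_mem_vectorSpan ℝ (hfm 2 1 (by decide)) (hfm 0 1 (by decide))
      rwa [hp2, hp0] at this
    have := (Submodule.mem_orthogonal _ _).1 hd1.1 _ hmemf
    rwa [vsub_eq_sub, hp1] at this
  -- scalar equations
  set t : ℝ := ⟪u, v⟫ with htdef
  have e1 : x * t + y * dist A C ^ 2 - x * dist A B ^ 2 - y * t = 0 := by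
    have hCB : C - B = v - u := by rw [hu, hv]; abel
    have h5 := E0
    rw [hCB, ← hw] at h5
    simp only [inner_sub_left, inner_add_right, real_inner_smul_right,
      real_inner_comm u v] at h5
    rw [hb2, hc2] at h5
    linear_combination h5
  have hH : H = x • u + y • v + A := sub_eq_iff_eq_add.mp hw.symm
  have e2 : x * t + y * dist A C ^ 2 - t = 0 := by
    have hHB : H - B = x • u + y • v - u := by
      rw [hH, hu]; abel
    have hCA : C - A = v := hv.symm
    have h5 := E1
    rw [hHB, hCA] at h5
    simp only [inner_sub_right, inner_add_right, real_inner_smul_right,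
      real_inner_comm u v] at h5
    rw [hb2] at h5
    linear_combination h5
  have hD2 : t ^ 2 - dist A C ^ 2 * dist A B ^ 2 ≠ 0 := by
    intro he; apply hD; rw [hc2, hb2]; linarith
  -- centroid and incenter as combinations of u, v
  set G : EuclideanSpace ℝ (Fin 2) := (1/3 : ℝ) • A + (1/3 : ℝ) • B + (1/3 : ℝ) • C with hG
  set I : EuclideanSpace ℝ (Fin 2) :=
    (dist B C / (dist B C + dist A C + dist A B)) • A +
      (dist A C / (dist B C + dist A C + dist A B)) • B +
      (dist A B / (dist B C + dist A C + dist A B)) • C with hI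
  have hS0 : dist B C + dist A C + dist A B ≠ 0 := by positivity
  have hIG : I - G = (dist A C / (dist B C + dist A C + dist A B) - 1/3) • u +
      (dist A B / (dist B C + dist A C + dist A B) - 1/3) • v := by
    have hcoef : dist B C / (dist B C + dist A C + dist A B) =
        1 - dist A C / (dist B C + dist A C + dist A B) -
          dist A B / (dist B C + dist A C + dist A B) := by
      field_simp
      ring
    rw [hI, hG, hcoef, hu, hv]
    module
  have hHG : H - G = (x - 1/3) • u + (y - 1/3) • v := by
    rw [hG, hH, hu, hv]; module
  -- reduce collinearity to a determinant condition
  have hmemG : G ∈ ({I, G, H} : Set (EuclideanSpace ℝ (Fin 2))) :=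
    Set.mem_insert_iff.mpr (Or.inr (Set.mem_insert _ _))
  rw [collinear_iff_of_mem hmemG]
  have hstep : (∃ w : EuclideanSpace ℝ (Fin 2),
      ∀ p ∈ ({I, G, H} : Set (EuclideanSpace ℝ (Fin 2))), ∃ r : ℝ, p = r • w +ᵥ G) ↔
      ((dist A C / (dist B C + dist A C + dist A B) - 1/3) * (y - 1/3) -
        (dist A B / (dist B C + dist A C + dist A B) - 1/3) * (x - 1/3) = 0) := by
    rw [← aux_dep hD (dist A C / (dist B C + dist A C + dist A B) - 1/3)
      (dist A B / (dist B C + dist A C + dist A B) - 1/3) (x - 1/3) (y - 1/3)]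
    constructor
    · rintro ⟨w, hww⟩
      refine ⟨w, ?_, ?_⟩
      · obtain ⟨r, hr⟩ := hww I (Set.mem_insert _ _)
        exact ⟨r, by rw [← hIG, sub_eq_iff_eq_add, hr, vadd_eq_add]⟩
      · obtain ⟨r, hr⟩ := hww H (by simp)
        exact ⟨r, by rw [← hHG, sub_eq_iff_eq_add, hr, vadd_eq_add]⟩
    · rintro ⟨w, ⟨r1, h1⟩, ⟨r2, h2⟩⟩
      refine ⟨w, ?_⟩
      rintro p (rfl | rfl | rfl)
      · exact ⟨r1, by rw [vadd_eq_add, ← sub_eq_iff_eq_add, hIG, h1]⟩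
      · exact ⟨0, by simp⟩
      · exact ⟨r2, by rw [vadd_eq_add, ← sub_eq_iff_eq_add, hHG, h2]⟩
  rw [hstep]
  -- the key polynomial identity
  have hx2 : x * (t^2 - dist A C^2 * dist A B^2) = -(t * (dist A C^2 - t)) := by
    linear_combination (dist A C^2) * e1 + (t - dist A C^2) * e2
  have hy2 : y * (t^2 - dist A C^2 * dist A B^2) = t * (t - dist A B^2) := by
    linear_combination (-t) * e1 + (t - dist A B^2) * e2
  have key : 2 * ((3*dist A C - (dist B C + dist A C + dist A B))*(3*y - 1) -
      (3*dist A B - (dist B C + dist A C + dist A B))*(3*x - 1)) *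
        (t^2 - dist A C^2 * dist A B^2) =
      3*(dist B C - dist A C)*(dist A C - dist A B)*(dist B C - dist A B)*
        (dist B C + dist A C + dist A B)^2 := by
    linear_combination (-6*(3*dist A B - (dist B C + dist A C + dist A B))) * hx2 +
      (6*(3*dist A C - (dist B C + dist A C + dist A B))) * hy2 +
      (-3*dist A C*dist A B^2 + 3*dist A C^2*dist A B + 3*dist B C*dist A B^2 -
        3*dist B C*dist A C^2 + 3*dist B C^2*dist A B - 3*dist B C^2*dist A C -
        6*t*dist A B + 6*t*dist A C) * ht
  have hdiv : (dist A C / (dist B C + dist A C + dist A B) - 1/3) * (y - 1/3) -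
      (dist A B / (dist B C + dist A C + dist A B) - 1/3) * (x - 1/3) =
      ((3*dist A C - (dist B C + dist A C + dist A B))*(3*y - 1) -
        (3*dist A B - (dist B C + dist A C + dist A B))*(3*x - 1)) /
        (9 * (dist B C + dist A C + dist A B)) := by
    field_simp
    ring
  rw [hdiv, div_eq_zero_iff]
  have h9 : (9 : ℝ) * (dist B C + dist A C + dist A B) ≠ 0 := by positivity
  rw [or_iff_left h9]
  constructor
  · intro hd2
    rw [hd2] at key
    have h3 : ((dist B C - dist A C) * ((dist A C - dist A B) * (dist B C - dist A B))) *
        (3 * (dist B C + dist A C + dist A B)^2) = 0 := by linear_combination -key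
    have hS2 : (3 : ℝ) * (dist B C + dist A C + dist A B)^2 ≠ 0 := by positivity
    have h4 := (mul_eq_zero.mp h3).resolve_right hS2
    rcases mul_eq_zero.mp h4 with h5 | h5
    · exact Or.inl (sub_eq_zero.mp h5)
    · rcases mul_eq_zero.mp h5 with h6 | h6
      · exact Or.inr (Or.inl (sub_eq_zero.mp h6))
      · exact Or.inr (Or.inr (sub_eq_zero.mp h6))
  · intro hiso
    have hprod : (dist B C - dist A C)*(dist A C - dist A B)*(dist B C - dist A B) = 0 := by
      rcases hiso with h5 | h5 | h5 <;> rw [h5] <;> ring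
    have h3 : ((3*dist A C - (dist B C + dist A C + dist A B))*(3*y - 1) -
        (3*dist A B - (dist B C + dist A C + dist A B))*(3*x - 1)) *
          (2 * (t^2 - dist A C^2 * dist A B^2)) = 0 := by
      linear_combination key + (3*(dist B C + dist A C + dist A B)^2) * hprod
    have h2D : (2 : ℝ) * (t^2 - dist A C^2 * dist A B^2) ≠ 0 := by
      intro he; exact hD2 (by linarith)
    exact (mul_eq_zero.mp h3).resolve_right h2D
end

section
/- Let A, B, C be three affinely independent points of the Euclidean plane E = EuclideanSpace ℝ (Fin 2), with side lengths a = dist B C, b = dist A C, c = dist A B. Then the Nagel point ((b+c−a)/(a+b+c)) • A + ((a+c−b)/(a+b+c)) • B + ((a+b−c)/(a+b+c)) • C coincides with the centroid (1/3)•A + (1/3)•B + (1/3)•C if and only if the triangle is equilateral, i.e. a = b and b = c. -/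
theorem nagel_eq_centroid_iff_equilateral
    (A B C : EuclideanSpace ℝ (Fin 2))
    (h : AffineIndependent ℝ ![A, B, C]) :
    (((dist A C + dist A B - dist B C) / (dist B C + dist A C + dist A B)) • A +
     ((dist B C + dist A B - dist A C) / (dist B C + dist A C + dist A B)) • B +
     ((dist B C + dist A C - dist A B) / (dist B C + dist A C + dist A B)) • C =
      (1 / 3 : ℝ) • A + (1 / 3 : ℝ) • B + (1 / 3 : ℝ) • C)
    ↔ (dist B C = dist A C ∧ dist A C = dist A B) := by
  have hinj := h.injective
  have hAB : A ≠ B := fun e => by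
    have : (0 : Fin 3) = 1 := hinj (by simpa using e); simp at this
  have hAC : A ≠ C := fun e => by
    have : (0 : Fin 3) = 2 := hinj (by simpa using e); simp at this
  have hBC : B ≠ C := fun e => by
    have : (1 : Fin 3) = 2 := hinj (by simpa using e); simp at this
  set a := dist B C with ha
  set b := dist A C with hb
  set c := dist A B with hc
  have hapos : 0 < a := dist_pos.2 hBC
  have hbpos : 0 < b := dist_pos.2 hAC
  have hcpos : 0 < c := dist_pos.2 hAB
  have hs : (0:ℝ) < a + b + c := by linarith
  have hs' : a + b + c ≠ 0 := ne_of_gt hs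
  constructor
  · intro heq
    set w : Fin 3 → ℝ := ![(b + c - a)/(a+b+c) - 1/3, (a + c - b)/(a+b+c) - 1/3,
      (a + b - c)/(a+b+c) - 1/3] with hw
    have hwsum : ∑ i : Fin 3, w i = 0 := by
      simp [hw, Fin.sum_univ_three]
      field_simp
      ring
    have hvsum : ∑ i : Fin 3, w i • (![A, B, C] i) = 0 := by
      simp [hw, Fin.sum_univ_three, sub_smul]
      rw [show ∀ x y z x' y' z' : EuclideanSpace ℝ (Fin 2),
        x - x' + (y - y') + (z - z') = (x + y + z) - (x' + y' + z') from
        fun _ _ _ _ _ _ => by abel]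
      rw [heq]
      simp
    have hzero := affineIndependent_iff.mp h Finset.univ w (by simpa using hwsum)
      (by simpa using hvsum)
    have h0 := hzero 0 (Finset.mem_univ _)
    have h1 := hzero 1 (Finset.mem_univ _)
    have h2 := hzero 2 (Finset.mem_univ _)
    simp [hw] at h0 h1 h2
    have e0 : (b + c - a)/(a+b+c) = 1/3 := by linarith
    have e1 : (a + c - b)/(a+b+c) = 1/3 := by linarith
    rw [div_eq_div_iff hs' (by norm_num)] at e0 e1
    constructor <;> [skip; skip] <;> linarith
  · rintro ⟨h1, h2⟩
    have e1 : (b + c - a)/(a+b+c) = 1/3 := by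
      rw [div_eq_div_iff hs' (by norm_num)]; linarith
    have e2 : (a + c - b)/(a+b+c) = 1/3 := by
      rw [div_eq_div_iff hs' (by norm_num)]; linarith
    have e3 : (a + b - c)/(a+b+c) = 1/3 := by
      rw [div_eq_div_iff hs' (by norm_num)]; linarith
    rw [e1, e2, e3]
end

section
/- Let G be a group acting on types α and β (MulAction G α and MulAction G β), and assume that for every a ∈ α there exists b ∈ β with MulAction.stabilizer G a ≤ MulAction.stabilizer G b. Then for every O ∈ α and P ∈ β, the following are equivalent: (1) there exists an equivariant map f : α → β (f (g • x) = g • f x for all g ∈ G and x ∈ α) with f O = P; (2) P is fixed by the stabilizer of O, i.e. MulAction.stabilizer G O ≤ MulAction.stabilizer G P. -/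
theorem exists_equivariant_map_sending_object_to_point_iff_fixed_by_stabilizer
    {G α β : Type*} [Group G] [MulAction G α] [MulAction G β]
    (hcond : ∀ a : α, ∃ b : β, MulAction.stabilizer G a ≤ MulAction.stabilizer G b)
    (O : α) (P : β) :
    (∃ f : α → β, (∀ (g : G) (x : α), f (g • x) = g • f x) ∧ f O = P) ↔
      MulAction.stabilizer G O ≤ MulAction.stabilizer G P := by
  classical
  constructor
  · rintro ⟨f, hf, rfl⟩ g hg
    rw [MulAction.mem_stabilizer_iff] at hg ⊢
    rw [← hf g O, hg]
  · intro hOP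
    have hpair : ∀ q : Quotient (MulAction.orbitRel G α),
        ∃ p : α × β, Quotient.mk (MulAction.orbitRel G α) p.1 = q ∧
          MulAction.stabilizer G p.1 ≤ MulAction.stabilizer G p.2 ∧
          (q = Quotient.mk (MulAction.orbitRel G α) O → p = (O, P)) := by
      intro q
      by_cases hq : q = Quotient.mk (MulAction.orbitRel G α) O
      · exact ⟨(O, P), hq ▸ rfl, hOP, fun _ => rfl⟩
      · obtain ⟨b, hb⟩ := hcond q.out
        exact ⟨(q.out, b), q.out_eq, hb, fun h => absurd h hq⟩
    choose p hp1 hp2 hp3 using hpair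
    have key : ∀ (q : Quotient (MulAction.orbitRel G α)) (g g' : G),
        g • (p q).1 = g' • (p q).1 → g • (p q).2 = g' • (p q).2 := by
      intro q g g' h
      have hmem : g'⁻¹ * g ∈ MulAction.stabilizer G (p q).1 := by
        rw [MulAction.mem_stabilizer_iff, mul_smul, h, ← mul_smul, inv_mul_cancel, one_smul]
      have h2 := hp2 q hmem
      rw [MulAction.mem_stabilizer_iff, mul_smul] at h2
      conv_rhs => rw [← h2]
      rw [smul_inv_smul]
    have hσ : ∀ x : α, ∃ g : G, g • (p (Quotient.mk (MulAction.orbitRel G α) x)).1 = x := by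
      intro x
      have h' : (p (Quotient.mk (MulAction.orbitRel G α) x)).1 ∈ MulAction.orbit G x :=
        Quotient.exact (hp1 (Quotient.mk (MulAction.orbitRel G α) x))
      rw [MulAction.mem_orbit_iff] at h'
      obtain ⟨g, hg⟩ := h'
      exact ⟨g⁻¹, by rw [← hg, inv_smul_smul]⟩
    choose σ hσ using hσ
    refine ⟨fun x => σ x • (p (Quotient.mk (MulAction.orbitRel G α) x)).2, ?_, ?_⟩
    · intro g x
      have hq : Quotient.mk (MulAction.orbitRel G α) (g • x)
          = Quotient.mk (MulAction.orbitRel G α) x :=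
        Quotient.sound (MulAction.mem_orbit x g)
      show σ (g • x) • (p (Quotient.mk (MulAction.orbitRel G α) (g • x))).2
          = g • σ x • (p (Quotient.mk (MulAction.orbitRel G α) x)).2
      rw [hq, smul_smul]
      apply key
      rw [mul_smul, hσ x]
      have h3 := hσ (g • x)
      rw [hq] at h3
      exact h3
    · have hO := hp3 (Quotient.mk (MulAction.orbitRel G α) O) rfl
      have h1 := hσ O
      show σ O • (p (Quotient.mk (MulAction.orbitRel G α) O)).2 = P
      rw [hO] at h1 ⊢
      simp only at h1 ⊢
      exact hOP (MulAction.mem_stabilizer_iff.mpr h1)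
end

section
/- Let E = EuclideanSpace ℝ (Fin n) with n ≥ 1 and let s be a nonempty finite set of points of E. Then there exists a unique point c ∈ E minimizing the maximum distance to s: there is exactly one c such that for every c' ∈ E, the maximum over x ∈ s of dist x c is at most the maximum over x ∈ s of dist x c'. (Equivalently, the smallest closed ball enclosing s has a uniquely determined center.) -/
lemma dist_sq_midpoint_aux {E : Type*} [NormedAddCommGroup E] [InnerProductSpace ℝ E]
    (x a b : E) :
    dist x (midpoint ℝ a b) ^ 2 =
      (dist x a ^ 2 + dist x b ^ 2) / 2 - dist a b ^ 2 / 4 := by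
  have h := parallelogram_law_with_norm ℝ (x - a) (x - b)
  have hm : (2 : ℝ) • (x - midpoint ℝ a b) = (x - a) + (x - b) := by
    rw [smul_sub, two_smul, two_smul, midpoint_add_self]
    abel
  have h1 : dist x (midpoint ℝ a b) = (2 : ℝ)⁻¹ * ‖(x - a) + (x - b)‖ := by
    rw [dist_eq_norm, ← hm, norm_smul]
    simp
  have h2 : dist a b = ‖(x - a) - (x - b)‖ := by
    rw [dist_eq_norm, ← norm_neg]
    congr 1
    abel
  rw [h1, h2, dist_eq_norm, dist_eq_norm]
  nlinarith [h]

theorem smallest_enclosing_ball_center_exists_unique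
    (n : ℕ) (hn : 1 ≤ n)
    (s : Finset (EuclideanSpace ℝ (Fin n))) (hs : s.Nonempty) :
    ∃! c : EuclideanSpace ℝ (Fin n),
      ∀ c' : EuclideanSpace ℝ (Fin n),
        s.sup' hs (fun x => dist x c) ≤ s.sup' hs (fun x => dist x c') := by
  set f : EuclideanSpace ℝ (Fin n) → ℝ := fun c => s.sup' hs (fun x => dist x c) with hf
  have hfc : Continuous f := by
    exact Continuous.finset_sup'_apply hs (fun x _ => Continuous.dist continuous_const continuous_id)
  obtain ⟨x₀, hx₀⟩ := hs.exists_mem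
  -- existence of a minimizer over a big closed ball, which is a global minimizer
  have hcpt : IsCompact (Metric.closedBall x₀ (2 * f x₀ + 1)) := isCompact_closedBall _ _
  have hmem : x₀ ∈ Metric.closedBall x₀ (2 * f x₀ + 1) := by
    have h1 : dist x₀ x₀ ≤ f x₀ := Finset.le_sup' (fun x => dist x x₀) hx₀
    have : 0 ≤ f x₀ := le_trans dist_nonneg h1
    simp [Metric.mem_closedBall]
    linarith
  obtain ⟨c, hcball, hcmin⟩ := hcpt.exists_isMinOn ⟨x₀, hmem⟩ hfc.continuousOn
  have hglobal : ∀ c', f c ≤ f c' := by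
    intro c'
    by_cases h : c' ∈ Metric.closedBall x₀ (2 * f x₀ + 1)
    · exact hcmin h
    · have hd : 2 * f x₀ + 1 < dist c' x₀ := by
        simpa [Metric.mem_closedBall] using h
      have h1 : f c ≤ f x₀ := hcmin hmem
      have h2 : dist x₀ c' ≤ f c' := Finset.le_sup' (fun x => dist x c') hx₀
      have h3 := dist_comm c' x₀
      have h0 : 0 ≤ f x₀ := le_trans dist_nonneg (Finset.le_sup' (fun x => dist x x₀) hx₀)
      linarith
  refine ⟨c, hglobal, ?_⟩
  intro b hb
  -- uniqueness: b and c are both minimizers; consider the midpoint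
  have hfb : f b = f c := le_antisymm (hb c) (hglobal b)
  set m := midpoint ℝ b c with hm
  have hmle : ∀ x ∈ s, dist x m ^ 2 ≤ f c ^ 2 - dist b c ^ 2 / 4 := by
    intro x hx
    have h1 : dist x b ≤ f b := Finset.le_sup' (fun y => dist y b) hx
    have h2 : dist x c ≤ f c := Finset.le_sup' (fun y => dist y c) hx
    have h3 := dist_sq_midpoint_aux x b c
    have hb0 : 0 ≤ dist x b := dist_nonneg
    have hc0 : 0 ≤ dist x c := dist_nonneg
    nlinarith [hfb]
  have hfm : f c ≤ f m := hglobal m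
  have hf0 : 0 ≤ f c := le_trans dist_nonneg (Finset.le_sup' (fun x => dist x c) hx₀)
  obtain ⟨y, hy, hym⟩ := Finset.exists_mem_eq_sup' hs (fun x => dist x m)
  have h4 : f m ^ 2 ≤ f c ^ 2 - dist b c ^ 2 / 4 := by
    have hym' : f m = dist y m := hym
    rw [hym']
    exact hmle y hy
  have hbc : dist b c = 0 := by
    nlinarith [dist_nonneg (x := b) (y := c), sq_nonneg (dist b c)]
  exact dist_eq_zero.mp hbc
end

section
/- Let E = EuclideanSpace ℝ (Fin 2) and let f be a map from tuples (Fin 4 → E) to E which is invariant under permutations of its four arguments (f (V ∘ π) = f V for every permutation π of Fin 4) and equivariant under similarities (f (T ∘ V) = T (f V) for every similarity T of E). Let V : Fin 4 → E be the vertex tuple (A, B, C, D) of a nondegenerate rectangle: B − A = C − D, dist A C = dist B D, A ≠ B, and B ≠ C. Then f V = midpoint A C, the intersection point of the diagonals. In particular, every center defined on such configurations assigns to a rectangle the same point. -/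
/-- A similarity of a metric space: a surjective map multiplying all distances
by a fixed positive ratio. -/
def IsSimilarity {E : Type*} [MetricSpace E] (T : E → E) : Prop :=
  Function.Surjective T ∧ ∃ r : ℝ, 0 < r ∧ ∀ x y, dist (T x) (T y) = r * dist x y

theorem center_of_rectangle_is_diagonal_midpoint
    (f : (Fin 4 → EuclideanSpace ℝ (Fin 2)) → EuclideanSpace ℝ (Fin 2))
    (hperm : ∀ (V : Fin 4 → EuclideanSpace ℝ (Fin 2)) (π : Equiv.Perm (Fin 4)),
      f (V ∘ π) = f V)
    (hequiv : ∀ (T : EuclideanSpace ℝ (Fin 2) → EuclideanSpace ℝ (Fin 2)),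
      IsSimilarity T → ∀ V : Fin 4 → EuclideanSpace ℝ (Fin 2), f (T ∘ V) = T (f V))
    (A B C D : EuclideanSpace ℝ (Fin 2))
    (hpar : B - A = C - D) (hdiag : dist A C = dist B D)
    (hAB : A ≠ B) (hBC : B ≠ C) :
    f ![A, B, C, D] = midpoint ℝ A C := by
  set T : EuclideanSpace ℝ (Fin 2) → EuclideanSpace ℝ (Fin 2) := fun x => A + C - x with hT
  have hsim : IsSimilarity T := by
    refine ⟨fun y => ⟨A + C - y, by simp [hT]⟩, 1, one_pos, fun x y => ?_⟩
    simp only [hT, dist_eq_norm, one_mul]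
    rw [show A + C - x - (A + C - y) = -(x - y) by abel, norm_neg]
  have hACBD : A + C = B + D := by
    have h := sub_eq_sub_iff_add_eq_add.mp hpar
    -- h : B + D = C + A
    rw [add_comm C A] at h
    exact h.symm
  set π : Equiv.Perm (Fin 4) := (Equiv.swap 0 2).trans (Equiv.swap 1 3) with hπ
  have hcomp : T ∘ ![A, B, C, D] = ![A, B, C, D] ∘ π := by
    funext i
    fin_cases i <;>
      simp [hT, hπ, Equiv.swap_apply_def] <;> rw [hACBD] <;> abel
  have hfix : T (f ![A, B, C, D]) = f ![A, B, C, D] := by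
    rw [← hequiv T hsim, hcomp, hperm]
  set p := f ![A, B, C, D] with hp
  have h2 : p + p = A + C := by
    have : A + C - p = p := hfix
    rw [sub_eq_iff_eq_add] at this
    rw [this]
  have h3 : (2 : ℝ) • p = (2 : ℝ) • midpoint ℝ A C := by
    rw [two_smul, two_smul, midpoint_add_self, h2]
  exact smul_right_injective _ (two_ne_zero) h3
end
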